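/- arXiv:2504.07451 — 2 statements merged into one kernel-verified Lean document; each statement's English description precedes it below -/
import Mathlib

section
/- If f : X → ℝ∪{±∞} is lower pseudo-continuous at x ∈ X (for all y with f(y) < f(x), f(y) < liminf_{z→x} f(z)), then f is submonotone at x: for every net x_α → x with (f(x_α)) decreasing, f(x) ≤ f(x_α) for all α. -/
open Filter Topology

universe u

/-- `liminf_{z → x} f(z) = sup_{U ∈ N(x)} inf_{z ∈ U} f(z)`. -/
noncomputable def limInfAt {X : Type u} [TopologicalSpace X] (f : X → EReal) (x : X) : EReal :=
  ⨆ U ∈ 𝓝 x, ⨅ z ∈ U, f z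

/-- Lower pseudo-continuity at `x`. -/
def LPCAt {X : Type u} [TopologicalSpace X] (f : X → EReal) (x : X) : Prop :=
  ∀ y, f y < f x → f y < limInfAt f x

/-- Submonotonicity at `x`: for every net `u` (indexed by a nonempty directed preorder)
converging to `x` with decreasing values `f (u α)`, one has `f x ≤ f (u α)` for all `α`. -/
def SMAt {X : Type u} [TopologicalSpace X] (f : X → EReal) (x : X) : Prop :=
  ∀ (ι : Type u) [Preorder ι] [IsDirected ι (· ≤ ·)] [Nonempty ι] (u : ι → X),
    Tendsto u atTop (𝓝 x) →
    (∀ a b : ι, a ≤ b → f (u b) ≤ f (u a)) →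
    ∀ a : ι, f x ≤ f (u a)

theorem lpc_implies_sm {X : Type u} [TopologicalSpace X]
    (f : X → EReal) (x : X) (h : LPCAt f x) : SMAt f x := by
  intro ι _ _ _ u hu hdec a
  by_contra hlt
  push_neg at hlt
  have h1 := h (u a) hlt
  rw [limInfAt] at h1
  simp only [lt_iSup_iff] at h1
  obtain ⟨U, hU, hU2⟩ := h1
  have hev : ∀ᶠ b in atTop, u b ∈ U := hu hU
  obtain ⟨b0, hb0⟩ := eventually_atTop.mp hev
  obtain ⟨c, hca, hcb⟩ := directed_of (· ≤ ·) a b0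
  have hmem : u c ∈ U := hb0 c hcb
  have h3 : f (u a) < f (u c) :=
    lt_of_lt_of_le hU2 (iInf₂_le (u c) hmem)
  exact absurd (hdec a c hca) (not_le.mpr h3)
end

section
/- If X is first countable and f : X → ℝ∪{±∞} is lower monotone at x (for every sequence xₙ → x with f(xₙ) decreasing, f(x) ≤ f(xₙ) for all n), then f is submonotone at x (the same property for nets). -/
open Filter Topology

universe u

/-- Lower monotonicity at `x` (sequences). -/
def LMAt {X : Type u} [TopologicalSpace X] (f : X → EReal) (x : X) : Prop :=
  ∀ u : ℕ → X, Tendsto u atTop (𝓝 x) →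
    (∀ n : ℕ, f (u (n + 1)) ≤ f (u n)) →
    ∀ n : ℕ, f x ≤ f (u n)

theorem lm_implies_sm {X : Type u} [TopologicalSpace X] [FirstCountableTopology X]
    (f : X → EReal) (x : X) (h : LMAt f x) : SMAt f x := by
  intro ι _ _ _ u hu hmono a
  obtain ⟨V, hV⟩ := (𝓝 x).exists_antitone_basis
  -- for each n, eventually u d ∈ V n
  have key : ∀ (n : ℕ) (c : ι), ∃ d, c ≤ d ∧ u d ∈ V n := by
    intro n c
    have : ∀ᶠ d in atTop, u d ∈ V n := hu (hV.1.mem_of_mem trivial)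
    obtain ⟨c₀, hc₀⟩ := eventually_atTop.mp this
    obtain ⟨d, hcd, hc₀d⟩ := exists_ge_ge c c₀
    exact ⟨d, hcd, hc₀ d hc₀d⟩
  -- build increasing sequence of indices
  choose g hg1 hg2 using key
  let b : ℕ → ι := fun n => Nat.rec (g 0 a) (fun n c => g (n + 1) c) n
  have hb0 : a ≤ b 0 := hg1 0 a
  have hbs : ∀ n, b n ≤ b (n + 1) := fun n => hg1 (n + 1) (b n)
  have hbV : ∀ n, u (b n) ∈ V n := by
    intro n
    cases n with
    | zero => exact hg2 0 a
    | succ n => exact hg2 (n + 1) (b n)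
  have hmonob : Monotone b := monotone_nat_of_le_succ hbs
  have htend : Tendsto (fun n => u (b n)) atTop (𝓝 x) := by
    rw [hV.1.tendsto_right_iff]
    intro i _
    filter_upwards [eventually_ge_atTop i] with n hn
    exact hV.2 hn (hbV n)
  have := h (fun n => u (b n)) htend (fun n => hmono _ _ (hbs n)) 0
  exact this.trans (hmono a (b 0) hb0)
end
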